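/- arXiv:1504.02829 — 7 statements merged into one kernel-verified Lean document; each statement's English description precedes it below -/
import Mathlib

section
/- The operator L_α^(N) is symmetric in L^2(μ_α^(N)): for all f, g ∈ C^2(Δ^(N)), ∫ f L_α^(N) g dμ_α^(N) = ∫ g L_α^(N) f dμ_α^(N). -/
open MeasureTheory

noncomputable section

def simplex (N : ℕ) : Set (Fin N → ℝ) :=
  {x | (∀ i, 0 ≤ x i ∧ x i ≤ 1) ∧ ∑ i, x i ≤ 1}

def dirichletDensity (N : ℕ) (α : Fin (N + 1) → ℝ) (x : Fin N → ℝ) : ℝ :=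
  (Real.Gamma (∑ k, α k) / ∏ k, Real.Gamma (α k)) *
    Real.rpow (1 - ∑ i, x i) (α (Fin.last N) - 1) *
    ∏ i, Real.rpow (x i) (α (Fin.castSucc i) - 1)

def dirichlet (N : ℕ) (α : Fin (N + 1) → ℝ) : Measure (Fin N → ℝ) :=
  (volume.restrict (simplex N)).withDensity fun x => ENNReal.ofReal (dirichletDensity N α x)

/-- Partial derivative ∂_n f at x. -/
def pd (N : ℕ) (n : Fin N) (f : (Fin N → ℝ) → ℝ) (x : Fin N → ℝ) : ℝ :=
  fderiv ℝ f x (Pi.single n 1)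

/-- The generator L_α^(N) = Σ_n [x_n(1−|x|₁)∂_n² + (α_n(1−|x|₁) − α_{N+1} x_n)∂_n]. -/
def Lop (N : ℕ) (α : Fin (N + 1) → ℝ) (f : (Fin N → ℝ) → ℝ) (x : Fin N → ℝ) : ℝ :=
  ∑ n, (x n * (1 - ∑ i, x i) * pd N n (fun y => pd N n f y) x
    + (α (Fin.castSucc n) * (1 - ∑ i, x i) - α (Fin.last N) * x n) * pd N n f x)

/-!
Integration by parts in each coordinate separately. For `W = f ∂ₙg - g ∂ₙf`, the `n`-th summand of
`ρ (f Lg - g Lf)` (`ρ` the Dirichlet density) is `∂ₙ (xₙ (1 - |x|₁) ρ W)`. On the segment of the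
simplex in direction `n` whose other coordinates are `y`, the flux `xₙ (1 - |x|₁) ρ` is a multiple
of `t ^ αₙ (L - t) ^ α_{N+1}` with `L = 1 - |y|₁`, which vanishes at both ends `t = 0` and `t = L`;
by Fubini and the fundamental theorem of calculus every summand integrates to zero.

Integrability of `ρ` is proved by induction on `N`: integrating out the last coordinate leaves a
Beta integral times the Dirichlet weight whose last two parameters are merged.
-/

open Set

theorem mem_simplex_iff {N : ℕ} {x : Fin N → ℝ} :
    x ∈ simplex N ↔ (∀ i, 0 ≤ x i) ∧ ∑ i, x i ≤ 1 :=
  ⟨fun h => ⟨fun i => (h.1 i).1, h.2⟩, fun h =>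
    ⟨fun i => ⟨h.1 i, (Finset.single_le_sum (fun j _ => h.1 j) (Finset.mem_univ i)).trans h.2⟩,
      h.2⟩⟩

theorem isClosed_simplex (N : ℕ) : IsClosed (simplex N) := by
  have : simplex N = (⋂ i, {x | 0 ≤ x i}) ∩ {x | ∑ i, x i ≤ 1} := by
    ext x; simp [mem_simplex_iff]
  rw [this]
  exact (isClosed_iInter fun i => isClosed_le continuous_const (continuous_apply i)).inter
    (isClosed_le (by fun_prop) continuous_const)

theorem isCompact_simplex (N : ℕ) : IsCompact (simplex N) :=
  (isCompact_univ_pi fun _ => isCompact_Icc).of_isClosed_subset (isClosed_simplex N)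
    fun _ hx i _ => hx.1 i

theorem measurableSet_simplex (N : ℕ) : MeasurableSet (simplex N) :=
  (isClosed_simplex N).measurableSet

theorem sum_insertNth {M : ℕ} (n : Fin (M + 1)) (t : ℝ) (y : Fin M → ℝ) :
    ∑ j, n.insertNth t y j = t + ∑ k, y k := by
  simp [Fin.sum_univ_succAbove _ n]

theorem insertNth_mem_simplex_iff {M : ℕ} {n : Fin (M + 1)} {t : ℝ} {y : Fin M → ℝ} :
    n.insertNth t y ∈ simplex (M + 1) ↔ y ∈ simplex M ∧ t ∈ Icc 0 (1 - ∑ k, y k) := by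
  simp only [mem_simplex_iff, n.forall_iff_succAbove, Fin.insertNth_apply_same,
    Fin.insertNth_apply_succAbove, sum_insertNth, mem_Icc]
  constructor
  · rintro ⟨⟨ht, hy⟩, hs⟩
    exact ⟨⟨hy, by linarith [Finset.sum_nonneg fun k (_ : k ∈ Finset.univ) => hy k]⟩, ht,
      by linarith⟩
  · rintro ⟨⟨hy, -⟩, ht, hs⟩
    exact ⟨⟨ht, hy⟩, by linarith⟩

section Fubini

variable {M : ℕ}

theorem measurePreserving_insertNth (n : Fin (M + 1)) :
    MeasurePreserving (fun p : ℝ × (Fin M → ℝ) => (n.insertNth p.1 p.2 : Fin (M + 1) → ℝ))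
      ((volume : Measure ℝ).prod volume) volume :=
  (volume_preserving_piFinSuccAbove (fun _ : Fin (M + 1) => ℝ) n).symm _

theorem measurableEmbedding_insertNth (n : Fin (M + 1)) :
    MeasurableEmbedding (fun p : ℝ × (Fin M → ℝ) => (n.insertNth p.1 p.2 : Fin (M + 1) → ℝ)) :=
  (MeasurableEquiv.piFinSuccAbove (fun _ : Fin (M + 1) => ℝ) n).symm.measurableEmbedding

theorem integrable_comp_insertNth_iff (n : Fin (M + 1)) {G : (Fin (M + 1) → ℝ) → ℝ} :
    Integrable (fun p : ℝ × (Fin M → ℝ) => G (n.insertNth p.1 p.2))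
      ((volume : Measure ℝ).prod volume) ↔ Integrable G :=
  (measurePreserving_insertNth n).integrable_comp_emb (measurableEmbedding_insertNth n)

theorem integral_eq_integral_integral_insertNth (n : Fin (M + 1))
    {G : (Fin (M + 1) → ℝ) → ℝ} (hG : Integrable G) :
    ∫ x, G x = ∫ y, ∫ t, G (n.insertNth t y) := by
  rw [← (measurePreserving_insertNth n).integral_comp (measurableEmbedding_insertNth n),
    integral_prod_symm _ ((integrable_comp_insertNth_iff n).2 hG)]

end Fubini

section BetaWeight

variable {a b L : ℝ}

theorem intervalIntegrable_rpow_mul_rpow_mul (ha : 0 < a) (hb : 0 < b) (hL : 0 ≤ L)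
    {K : ℝ → ℝ} (hK : Continuous K) :
    IntervalIntegrable (fun t => t ^ (a - 1) * (L - t) ^ (b - 1) * K t) volume 0 L := by
  rcases hL.eq_or_lt with rfl | hL
  · exact IntervalIntegrable.refl
  -- near `0` only `t ^ (a - 1)` is singular; near `L` reflect `t ↦ L - t`
  have near_zero : ∀ {a b : ℝ} {K : ℝ → ℝ}, 0 < a → Continuous K →
      IntervalIntegrable (fun t => t ^ (a - 1) * (L - t) ^ (b - 1) * K t) volume 0 (L / 2) := by
    intro a b K ha hK
    have hsing := intervalIntegral.intervalIntegrable_rpow' (a := 0) (b := L / 2)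
      (r := a - 1) (by linarith)
    refine (hsing.mul_continuousOn (g := fun t => (L - t) ^ (b - 1) * K t) ?_).congr ?_
    · refine ((continuousOn_const.sub continuousOn_id).rpow_const fun t ht => ?_).mul
        hK.continuousOn
      rw [uIcc_of_le (by linarith)] at ht
      exact Or.inl (sub_pos.2 (show t < L by linarith [ht.2])).ne'
    · exact fun t _ => (mul_assoc _ _ _).symm
  have near_L := ((near_zero (b := a) (K := fun t => K (L - t)) hb
    (hK.comp (continuous_sub_left L))).comp_sub_left L).symm
  simp only [sub_sub_cancel, sub_zero, sub_half] at near_L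
  exact (near_zero ha hK).trans (near_L.congr fun t _ => by ring)

theorem integral_rpow_mul_rpow (hL : 0 < L) :
    ∫ t in 0..L, t ^ (a - 1) * (L - t) ^ (b - 1) =
      L ^ (a + b - 1) * ∫ s in 0..1, s ^ (a - 1) * (1 - s) ^ (b - 1) := by
  have hscale := intervalIntegral.integral_comp_mul_left
    (fun t => t ^ (a - 1) * (L - t) ^ (b - 1)) hL.ne' (a := 0) (b := 1)
  simp only [mul_zero, mul_one, smul_eq_mul] at hscale
  have hpow : L ^ (a + b - 1) = L * (L ^ (a - 1) * L ^ (b - 1)) := by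
    rw [← Real.rpow_add hL, show a + b - 1 = 1 + (a - 1 + (b - 1)) by ring,
      Real.rpow_add hL, Real.rpow_one]
  rw [eq_inv_mul_iff_mul_eq₀ hL.ne'] at hscale
  rw [← hscale, hpow, mul_assoc]
  congr 1
  rw [← intervalIntegral.integral_const_mul]
  refine intervalIntegral.integral_congr fun s hs => ?_
  rw [uIcc_of_le zero_le_one] at hs
  rw [show L - L * s = L * (1 - s) by ring, Real.mul_rpow hL.le hs.1,
    Real.mul_rpow hL.le (by linarith [hs.2])]
  ring

theorem integral_rpow_mul_rpow_mul_eq_zero (ha : 0 < a) (hb : 0 < b) (hL : 0 ≤ L)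
    {W W' : ℝ → ℝ} (hW : ∀ t, HasDerivAt W (W' t) t) (hW' : Continuous W') :
    ∫ t in 0..L, t ^ (a - 1) * (L - t) ^ (b - 1) *
      (t * (L - t) * W' t + (a * (L - t) - b * t) * W t) = 0 := by
  have hWc : Continuous W := continuous_iff_continuousAt.2 fun t => (hW t).continuousAt
  -- the integrand is the derivative of `t ^ a * (L - t) ^ b * W t`, which vanishes at `0` and `L`
  have hderiv : ∀ t ∈ Ioo 0 L, HasDerivAt (fun t => t ^ a * (L - t) ^ b * W t)
      (t ^ (a - 1) * (L - t) ^ (b - 1) *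
        (t * (L - t) * W' t + (a * (L - t) - b * t) * W t)) t := by
    rintro t ⟨ht0, htL⟩
    have hLt : 0 < L - t := by linarith
    have hu := Real.hasDerivAt_rpow_const (p := a) (Or.inl ht0.ne')
    have hv := (Real.hasDerivAt_rpow_const (p := b) (Or.inl hLt.ne')).comp t
      ((hasDerivAt_id t).const_sub L)
    refine ((hu.mul hv).mul (hW t)).congr_deriv ?_
    simp only [Pi.mul_apply, Function.comp_apply]
    rw [Real.rpow_sub_one ht0.ne', Real.rpow_sub_one hLt.ne']
    field_simp
    ring
  have hcont : Continuous fun t => t ^ a * (L - t) ^ b * W t :=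
    ((continuous_id.rpow_const fun _ => Or.inr ha.le).mul
      ((continuous_sub_left L).rpow_const fun _ => Or.inr hb.le)).mul hWc
  rw [intervalIntegral.integral_eq_sub_of_hasDerivAt_of_le hL hcont.continuousOn hderiv
    (intervalIntegrable_rpow_mul_rpow_mul ha hb hL (by fun_prop))]
  simp [Real.zero_rpow ha.ne', Real.zero_rpow hb.ne']

theorem setIntegral_Icc_rpow_mul_rpow_le (hL : 0 ≤ L) :
    ∫ t in Icc 0 L, t ^ (a - 1) * (L - t) ^ (b - 1) ≤
      L ^ (a + b - 1) * ∫ s in 0..1, s ^ (a - 1) * (1 - s) ^ (b - 1) := by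
  rw [integral_Icc_eq_integral_Ioc, ← intervalIntegral.integral_of_le hL]
  rcases hL.eq_or_lt with rfl | hL
  · rw [intervalIntegral.integral_same]
    refine mul_nonneg (Real.rpow_nonneg le_rfl _) (intervalIntegral.integral_nonneg zero_le_one
      fun s hs => mul_nonneg (Real.rpow_nonneg hs.1 _) (Real.rpow_nonneg ?_ _))
    linarith [hs.2]
  · exact (integral_rpow_mul_rpow hL).le

theorem integrableOn_Icc_rpow_mul_rpow (ha : 0 < a) (hb : 0 < b) :
    IntegrableOn (fun t => t ^ (a - 1) * (L - t) ^ (b - 1)) (Icc 0 L) := by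
  rcases lt_or_ge L 0 with hL | hL
  · rw [Icc_eq_empty hL.not_ge]; exact integrableOn_empty
  · rw [integrableOn_Icc_iff_integrableOn_Ioc, ← intervalIntegrable_iff_integrableOn_Ioc_of_le hL]
    simpa using intervalIntegrable_rpow_mul_rpow_mul ha hb hL (K := fun _ => 1) continuous_const

end BetaWeight

def dirichletWeight (N : ℕ) (α : Fin (N + 1) → ℝ) (x : Fin N → ℝ) : ℝ :=
  (1 - ∑ i, x i) ^ (α (Fin.last N) - 1) * ∏ i, x i ^ (α (Fin.castSucc i) - 1)

section DirichletWeight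

variable {N : ℕ} {α : Fin (N + 1) → ℝ}

theorem dirichletDensity_eq_const_mul_dirichletWeight :
    dirichletDensity N α =
      fun x => (Real.Gamma (∑ k, α k) / ∏ k, Real.Gamma (α k)) * dirichletWeight N α x := by
  ext x
  simp only [dirichletDensity, dirichletWeight, Real.rpow_eq_pow, mul_assoc]

theorem measurable_dirichletWeight : Measurable (dirichletWeight N α) := by
  unfold dirichletWeight; fun_prop

theorem dirichletWeight_nonneg {x : Fin N → ℝ} (hx : x ∈ simplex N) :
    0 ≤ dirichletWeight N α x := by
  rw [mem_simplex_iff] at hx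
  exact mul_nonneg (Real.rpow_nonneg (by linarith [hx.2]) _)
    (Finset.prod_nonneg fun i _ => Real.rpow_nonneg (hx.1 i) _)

theorem indicator_dirichletWeight_insertNth {M : ℕ} (α : Fin (M + 2) → ℝ) (n : Fin (M + 1))
    (t : ℝ) (y : Fin M → ℝ) :
    (simplex (M + 1)).indicator (dirichletWeight (M + 1) α) (n.insertNth t y) =
      (simplex M).indicator (fun y => ∏ k, y k ^ (α (n.succAbove k).castSucc - 1)) y *
        (Icc 0 (1 - ∑ k, y k)).indicator
          (fun t => t ^ (α n.castSucc - 1) * (1 - ∑ k, y k - t) ^ (α (Fin.last (M + 1)) - 1))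
          t := by
  by_cases hy : y ∈ simplex M
  · by_cases ht : t ∈ Icc 0 (1 - ∑ k, y k)
    · rw [indicator_of_mem (insertNth_mem_simplex_iff.2 ⟨hy, ht⟩), indicator_of_mem hy,
        indicator_of_mem ht, dirichletWeight, sum_insertNth,
        Fin.prod_univ_succAbove _ n]
      simp only [Fin.insertNth_apply_same, Fin.insertNth_apply_succAbove]
      ring_nf
    · rw [indicator_of_notMem (fun h => ht (insertNth_mem_simplex_iff.1 h).2),
        indicator_of_notMem ht, mul_zero]
  · rw [indicator_of_notMem (fun h => hy (insertNth_mem_simplex_iff.1 h).1),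
      indicator_of_notMem hy, zero_mul]

end DirichletWeight

def mergeLast {M : ℕ} (α : Fin (M + 2) → ℝ) : Fin (M + 1) → ℝ :=
  Fin.snoc (fun k : Fin M => α k.castSucc.castSucc) (α (Fin.last M).castSucc + α (Fin.last (M + 1)))

theorem integral_indicator_dirichletWeight_insertNth_last_le {M : ℕ} (α : Fin (M + 2) → ℝ)
    (y : Fin M → ℝ) :
    ∫ t, (simplex (M + 1)).indicator (dirichletWeight (M + 1) α) ((Fin.last M).insertNth t y) ≤
      (∫ s in 0..1, s ^ (α (Fin.last M).castSucc - 1) * (1 - s) ^ (α (Fin.last (M + 1)) - 1)) *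
        (simplex M).indicator (dirichletWeight M (mergeLast α)) y := by
  simp only [indicator_dirichletWeight_insertNth, Fin.succAbove_last]
  set a := α (Fin.last M).castSucc
  set b := α (Fin.last (M + 1))
  by_cases hy : y ∈ simplex M
  · obtain ⟨hy0, hy1⟩ := mem_simplex_iff.1 hy
    have hP : 0 ≤ ∏ k, y k ^ (α k.castSucc.castSucc - 1) :=
      Finset.prod_nonneg fun k _ => Real.rpow_nonneg (hy0 k) _
    simp only [indicator_of_mem hy, integral_const_mul]
    rw [integral_indicator measurableSet_Icc]
    calc _ ≤ (∏ k, y k ^ (α k.castSucc.castSucc - 1)) *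
          ((1 - ∑ k, y k) ^ (a + b - 1) * ∫ s in 0..1, s ^ (a - 1) * (1 - s) ^ (b - 1)) :=
          mul_le_mul_of_nonneg_left (setIntegral_Icc_rpow_mul_rpow_le (by linarith)) hP
      _ = _ := by
          simp only [dirichletWeight, mergeLast, Fin.snoc_last, Fin.snoc_castSucc]
          ring
  · simp [indicator_of_notMem hy]

theorem integrableOn_dirichletWeight :
    ∀ {N : ℕ} {α : Fin (N + 1) → ℝ}, (∀ k, 0 < α k) →
      IntegrableOn (dirichletWeight N α) (simplex N)
  | 0, α, _ => by
    refine (integrableOn_const (C := (1 : ℝ)) (isCompact_simplex 0).measure_lt_top.ne).congr_fun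
      (fun x _ => ?_) (measurableSet_simplex 0)
    simp [dirichletWeight]
  | M + 1, α, hα => by
    have hmerge : ∀ k, 0 < mergeLast α k := Fin.lastCases
      (by simpa [mergeLast] using add_pos (hα _) (hα _)) (fun k => by simpa [mergeLast] using hα _)
    have hnonneg : ∀ x, 0 ≤ (simplex (M + 1)).indicator (dirichletWeight (M + 1) α) x :=
      indicator_nonneg fun x hx => dirichletWeight_nonneg hx
    have hmeas : Measurable fun p : ℝ × (Fin M → ℝ) => (simplex (M + 1)).indicator
        (dirichletWeight (M + 1) α) ((Fin.last M).insertNth p.1 p.2) :=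
      (measurable_dirichletWeight.indicator (measurableSet_simplex _)).comp
        (measurableEmbedding_insertNth _).measurable
    rw [← integrable_indicator_iff (measurableSet_simplex _),
      ← integrable_comp_insertNth_iff (Fin.last M), integrable_prod_iff' hmeas.aestronglyMeasurable]
    refine ⟨Filter.Eventually.of_forall fun y => ?_, ?_⟩
    · simp only [indicator_dirichletWeight_insertNth]
      exact ((integrable_indicator_iff measurableSet_Icc).2
        (integrableOn_Icc_rpow_mul_rpow (hα _) (hα _))).const_mul _
    · simp only [Real.norm_of_nonneg (hnonneg _)]
      exact Integrable.mono'
        (((integrableOn_dirichletWeight hmerge).integrable_indicator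
          (measurableSet_simplex M)).const_mul _)
        hmeas.stronglyMeasurable.integral_prod_left'.aestronglyMeasurable
        (Filter.Eventually.of_forall fun y => by
          rw [Real.norm_of_nonneg (integral_nonneg fun t => hnonneg _)]
          exact integral_indicator_dirichletWeight_insertNth_last_le α y)

section Density

variable {N : ℕ} {α : Fin (N + 1) → ℝ}

theorem measurable_dirichletDensity : Measurable (dirichletDensity N α) := by
  rw [dirichletDensity_eq_const_mul_dirichletWeight]
  exact measurable_dirichletWeight.const_mul _

theorem dirichletDensity_nonneg (hα : ∀ k, 0 < α k) {x : Fin N → ℝ} (hx : x ∈ simplex N) :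
    0 ≤ dirichletDensity N α x := by
  rw [dirichletDensity_eq_const_mul_dirichletWeight]
  refine mul_nonneg (div_nonneg (Real.Gamma_pos_of_pos ?_).le
    (Finset.prod_nonneg fun k _ => (Real.Gamma_pos_of_pos (hα k)).le)) (dirichletWeight_nonneg hx)
  exact Finset.sum_pos (fun k _ => hα k) Finset.univ_nonempty

theorem integral_dirichlet (hα : ∀ k, 0 < α k) (F : (Fin N → ℝ) → ℝ) :
    ∫ x, F x ∂dirichlet N α = ∫ x in simplex N, dirichletDensity N α x * F x := by
  rw [dirichlet, integral_withDensity_eq_integral_toReal_smul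
    measurable_dirichletDensity.ennreal_ofReal (ae_of_all _ fun _ => ENNReal.ofReal_lt_top)]
  refine setIntegral_congr_fun (measurableSet_simplex N) fun x hx => ?_
  rw [ENNReal.toReal_ofReal (dirichletDensity_nonneg hα hx), smul_eq_mul]

theorem integrableOn_dirichletDensity_mul (hα : ∀ k, 0 < α k) {F : (Fin N → ℝ) → ℝ}
    (hF : Continuous F) : IntegrableOn (fun x => dirichletDensity N α x * F x) (simplex N) := by
  refine IntegrableOn.mul_continuousOn ?_ hF.continuousOn (isCompact_simplex N)
  rw [dirichletDensity_eq_const_mul_dirichletWeight]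
  exact (integrableOn_dirichletWeight hα).const_mul _

end Density

section PartialDerivative

variable {N : ℕ} {n : Fin N} {F G : (Fin N → ℝ) → ℝ} {x : Fin N → ℝ}

theorem contDiff_pd {k m : WithTop ℕ∞} (hF : ContDiff ℝ m F) (hk : k + 1 ≤ m) :
    ContDiff ℝ k (pd N n F) :=
  (hF.fderiv_right hk).clm_apply contDiff_const

theorem pd_mul (hF : DifferentiableAt ℝ F x) (hG : DifferentiableAt ℝ G x) :
    pd N n (fun y => F y * G y) x = F x * pd N n G x + G x * pd N n F x := by
  simp [pd, fderiv_fun_mul hF hG]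

theorem pd_sub (hF : DifferentiableAt ℝ F x) (hG : DifferentiableAt ℝ G x) :
    pd N n (fun y => F y - G y) x = pd N n F x - pd N n G x := by
  simp [pd, fderiv_fun_sub hF hG]

end PartialDerivative

theorem hasDerivAt_comp_insertNth {M : ℕ} {n : Fin (M + 1)} {F : (Fin (M + 1) → ℝ) → ℝ}
    {y : Fin M → ℝ} {t : ℝ} (hF : DifferentiableAt ℝ F (n.insertNth t y)) :
    HasDerivAt (fun s => F (n.insertNth s y)) (pd (M + 1) n F (n.insertNth t y)) t := by
  have hline : (fun s => (n.insertNth s y : Fin (M + 1) → ℝ)) =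
      Function.update (n.insertNth 0 y : Fin (M + 1) → ℝ) n :=
    funext fun s => (Fin.update_insertNth (α := fun _ => ℝ) n 0 s y).symm
  have h := hasDerivAt_update (n.insertNth 0 y : Fin (M + 1) → ℝ) n t
  rw [← hline] at h
  exact hF.hasFDerivAt.comp_hasDerivAt t h

/-- `dirichletDensity N α * divFlux N α n W = ∂ₙ (xₙ (1 - |x|₁) dirichletDensity N α W)` in the
interior of the simplex. -/
def divFlux (N : ℕ) (α : Fin (N + 1) → ℝ) (n : Fin N) (W : (Fin N → ℝ) → ℝ)
    (x : Fin N → ℝ) : ℝ :=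
  x n * (1 - ∑ i, x i) * pd N n W x
    + (α (Fin.castSucc n) * (1 - ∑ i, x i) - α (Fin.last N) * x n) * W x

section DivFlux

variable {N : ℕ} {α : Fin (N + 1) → ℝ}

theorem Lop_eq_sum_divFlux (f : (Fin N → ℝ) → ℝ) (x : Fin N → ℝ) :
    Lop N α f x = ∑ n, divFlux N α n (pd N n f) x :=
  rfl

theorem continuous_divFlux (n : Fin N) {W : (Fin N → ℝ) → ℝ} (hW : ContDiff ℝ 1 W) :
    Continuous (divFlux N α n W) := by
  have hpd : Continuous (pd N n W) := (contDiff_pd (k := 0) hW (by norm_num)).continuous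
  have hWc := hW.continuous
  unfold divFlux
  fun_prop

theorem continuous_Lop {f : (Fin N → ℝ) → ℝ} (hf : ContDiff ℝ 2 f) : Continuous (Lop N α f) :=
  continuous_finsetSum _ fun n _ => continuous_divFlux n (contDiff_pd hf (by norm_num))

theorem mul_Lop_sub_mul_Lop {f g : (Fin N → ℝ) → ℝ} (hf : ContDiff ℝ 2 f) (hg : ContDiff ℝ 2 g)
    (x : Fin N → ℝ) :
    f x * Lop N α g x - g x * Lop N α f x =
      ∑ n, divFlux N α n (fun y => f y * pd N n g y - g y * pd N n f y) x := by
  simp only [Lop_eq_sum_divFlux, Finset.mul_sum, ← Finset.sum_sub_distrib]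
  refine Finset.sum_congr rfl fun n _ => ?_
  have hdf := (hf.differentiable (by norm_num)).differentiableAt (x := x)
  have hdg := (hg.differentiable (by norm_num)).differentiableAt (x := x)
  have hdf' := ((contDiff_pd (n := n) (k := 1) hf (by norm_num)).differentiable
    (by norm_num)).differentiableAt (x := x)
  have hdg' := ((contDiff_pd (n := n) (k := 1) hg (by norm_num)).differentiable
    (by norm_num)).differentiableAt (x := x)
  simp only [divFlux]
  rw [pd_sub (F := fun y => f y * pd N n g y) (G := fun y => g y * pd N n f y)
    (hdf.mul hdg') (hdg.mul hdf'), pd_mul hdf hdg', pd_mul hdg hdf']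
  ring

end DivFlux

theorem setIntegral_dirichletDensity_mul_divFlux {N : ℕ} {α : Fin (N + 1) → ℝ}
    (hα : ∀ k, 0 < α k) (n : Fin N) {W : (Fin N → ℝ) → ℝ} (hW : ContDiff ℝ 1 W) :
    ∫ x in simplex N, dirichletDensity N α x * divFlux N α n W x = 0 := by
  obtain ⟨M, rfl⟩ : ∃ M, N = M + 1 := ⟨N - 1, by have := n.pos; omega⟩
  rw [← integral_indicator (measurableSet_simplex _), integral_eq_integral_integral_insertNth n
    ((integrable_indicator_iff (measurableSet_simplex _)).2
      (integrableOn_dirichletDensity_mul hα (continuous_divFlux n hW)))]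
  refine integral_eq_zero_of_ae (Filter.Eventually.of_forall fun y => ?_)
  simp only [dirichletDensity_eq_const_mul_dirichletWeight, mul_assoc, indicator_const_mul,
    indicator_mul_left]
  simp only [indicator_dirichletWeight_insertNth]
  by_cases hy : y ∈ simplex M
  swap
  · simp [indicator_of_notMem hy]
  have hL : 0 ≤ 1 - ∑ k, y k := by linarith [(mem_simplex_iff.1 hy).2]
  have hD : ∀ t, divFlux (M + 1) α n W (n.insertNth t y) =
      t * (1 - ∑ k, y k - t) * pd (M + 1) n W (n.insertNth t y) +
        (α n.castSucc * (1 - ∑ k, y k - t) - α (Fin.last (M + 1)) * t) * W (n.insertNth t y) := by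
    intro t
    simp only [divFlux, sum_insertNth, Fin.insertNth_apply_same]
    ring
  have hline := integral_rpow_mul_rpow_mul_eq_zero (hα n.castSucc) (hα (Fin.last _)) hL
    (W := fun s => W (n.insertNth s y)) (W' := fun s => pd (M + 1) n W (n.insertNth s y))
    (fun t => hasDerivAt_comp_insertNth (hW.differentiable one_ne_zero _))
    ((contDiff_pd (k := 0) hW (by norm_num)).continuous.comp
      (continuous_id.finInsertNth (A := fun _ => ℝ) n continuous_const))
  simp only [indicator_of_mem hy, mul_assoc, integral_const_mul, Pi.zero_apply]
  simp only [← indicator_mul_left (Icc _ _) _ (fun t => divFlux (M + 1) α n W (n.insertNth t y))]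
  rw [integral_indicator measurableSet_Icc, integral_Icc_eq_integral_Ioc,
    ← intervalIntegral.integral_of_le hL]
  simp only [hD, hline, mul_zero]

theorem Lop_symmetric_general (N : ℕ) (α : Fin (N + 1) → ℝ) (hα : ∀ k, 0 < α k)
    (f g : (Fin N → ℝ) → ℝ) (hf : ContDiff ℝ 2 f) (hg : ContDiff ℝ 2 g) :
    ∫ x, f x * Lop N α g x ∂(dirichlet N α) = ∫ x, g x * Lop N α f x ∂(dirichlet N α) := by
  have hW : ∀ n, ContDiff ℝ 1 fun y => f y * pd N n g y - g y * pd N n f y := fun n =>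
    ((hf.of_le (by norm_num)).mul (contDiff_pd hg (by norm_num))).sub
      ((hg.of_le (by norm_num)).mul (contDiff_pd hf (by norm_num)))
  rw [integral_dirichlet hα, integral_dirichlet hα, ← sub_eq_zero, ← integral_sub
    (integrableOn_dirichletDensity_mul (F := fun x => f x * Lop N α g x) hα
      (hf.continuous.mul (continuous_Lop hg)))
    (integrableOn_dirichletDensity_mul (F := fun x => g x * Lop N α f x) hα
      (hg.continuous.mul (continuous_Lop hf)))]
  simp only [← mul_sub, mul_Lop_sub_mul_Lop hf hg, Finset.mul_sum]
  rw [integral_finsetSum _ fun n _ =>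
    integrableOn_dirichletDensity_mul hα (continuous_divFlux n (hW n))]
  exact Finset.sum_eq_zero fun n _ => setIntegral_dirichletDensity_mul_divFlux hα n (hW n)

/-- Symmetry of L_α^(N) in L²(μ_α^(N)). -/
theorem Lop_symmetric (N : ℕ) (hN : 1 ≤ N) (α : Fin (N + 1) → ℝ) (hα : ∀ k, 0 < α k)
    (f g : (Fin N → ℝ) → ℝ) (hf : ContDiff ℝ 2 f) (hg : ContDiff ℝ 2 g) :
    ∫ x, f x * Lop N α g x ∂(dirichlet N α) = ∫ x, g x * Lop N α f x ∂(dirichlet N α) :=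
  Lop_symmetric_general N α hα f g hf hg

end
end

section
/- The function u_N(x) = Σ_{k=1}^N x_k − (|α|_1 − α_{N+1})/|α|_1 is an eigenfunction of L_α^(N) with eigenvalue −|α|_1: L_α^(N) u_N = −|α|_1 u_N. -/
/-! The function u_N is affine with every partial derivative equal to 1, so the diffusion part of
L_α^(N) vanishes on it and only the drift survives:
L u_N = (|α|₁ − α_{N+1})(1 − |x|₁) − α_{N+1}|x|₁ = −|α|₁ u_N. -/

open MeasureTheory

noncomputable section

lemma pd_const (N : ℕ) (c : ℝ) (n : Fin N) (x : Fin N → ℝ) : pd N n (fun _ => c) x = 0 := by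
  rw [pd, fderiv_const_apply, zero_apply]

lemma pd_sum_sub_const (N : ℕ) (c : ℝ) (n : Fin N) (x : Fin N → ℝ) :
    pd N n (fun y => (∑ k, y k) - c) x = 1 := by
  have h := (HasFDerivAt.fun_sum fun k (_ : k ∈ Finset.univ) =>
    hasFDerivAt_apply (𝕜 := ℝ) k x).sub_const c
  rw [pd, h.fderiv]
  simp [Pi.single_apply]

lemma Lop_sum_sub_const (N : ℕ) (α : Fin (N + 1) → ℝ) (c : ℝ) (x : Fin N → ℝ) :
    Lop N α (fun y => (∑ k, y k) - c) x
      = (∑ n : Fin N, α (Fin.castSucc n)) * (1 - ∑ i, x i) - α (Fin.last N) * ∑ i, x i := by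
  simp only [Lop, pd_sum_sub_const, pd_const, mul_zero, zero_add, mul_one, Finset.sum_sub_distrib,
    ← Finset.sum_mul, ← Finset.mul_sum]

theorem Lop_eigen_sum_general (N : ℕ) (α : Fin (N + 1) → ℝ) (hα : ∀ k, 0 < α k)
    (x : Fin N → ℝ) :
    Lop N α (fun y => (∑ k, y k) - ((∑ k, α k) - α (Fin.last N)) / ∑ k, α k) x
      = -(∑ k, α k) * ((∑ k, x k) - ((∑ k, α k) - α (Fin.last N)) / ∑ k, α k) := by
  have hA : (∑ k, α k) ≠ 0 := (Finset.sum_pos (fun k _ => hα k) Finset.univ_nonempty).ne'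
  rw [Lop_sum_sub_const, Fin.sum_univ_castSucc α]
  rw [Fin.sum_univ_castSucc α] at hA
  field_simp
  ring

/-- u_N(x) = Σ_k x_k − (|α|₁−α_{N+1})/|α|₁ is an eigenfunction of L_α^(N)
with eigenvalue −|α|₁. -/
theorem Lop_eigen_sum (N : ℕ) (hN : 1 ≤ N) (α : Fin (N + 1) → ℝ) (hα : ∀ k, 0 < α k)
    (x : Fin N → ℝ) (hx : x ∈ simplex N) :
    Lop N α (fun y => (∑ k, y k) - ((∑ k, α k) - α (Fin.last N)) / ∑ k, α k) x
      = -(∑ k, α k) * ((∑ k, x k) - ((∑ k, α k) - α (Fin.last N)) / ∑ k, α k) :=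
  Lop_eigen_sum_general N α hα x

end
end

section
/- Let M_d be the K_d × K_d matrix with M_d(k,k) = dα_{N+1} + Σ_{n=1}^N (k_n+α_n−1)k_n, M_d(k, k+e_n−e_m) = (k_n+α_n)(k_n+1) for n ≠ m, and 0 otherwise. Then every eigenvalue of M_d is greater than or equal to d α_{N+1}. -/
/-!
With the weight `w(k) = ∏ₙ (αₙ)_{kₙ} kₙ!` (rising factorials), `w(k + eₙ) = w(k)(kₙ + αₙ)(kₙ + 1)`.
On functions supported on `K_d`, `M_d - dα_{N+1}` then factors as `L* L`, where
`(L v)(j) = ∑ₘ (jₘ + αₘ)(jₘ + 1) v(j + eₘ)` lowers `K_d` to `K_{d-1}` and `L*` is its adjoint for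
the `w`-weighted inner products. Hence `⟨v, (M_d - dα_{N+1}) v⟩_w = ‖L v‖²_w ≥ 0`, and an
eigenvector with eigenvalue `λ` gives `(λ - dα_{N+1}) ‖v‖²_w ≥ 0`.
-/

noncomputable section

/-- The multi-index k + e_n − e_m (ℕ-valued; if k_m = 0 the result leaves K_d and
is killed by the support condition below). -/
def shiftIdx (N : ℕ) (k : Fin N → ℕ) (n m : Fin N) : Fin N → ℕ :=
  fun i => k i + (if i = n then 1 else 0) - (if i = m then 1 else 0)

open Finset

namespace MdEigenvalue

lemma single_one_le_of_ne_zero {ι : Type*} [DecidableEq ι] {k : ι → ℕ} {n : ι} (h : k n ≠ 0) :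
    Pi.single n 1 ≤ k := by
  intro i
  rcases eq_or_ne i n with rfl | hi
  · simpa [Nat.one_le_iff_ne_zero] using h
  · simp [hi]

variable {ι : Type*} [Fintype ι]

def weight (a : ι → ℝ) (k : ι → ℕ) : ℝ :=
  ∏ n, (ascPochhammer ℝ (k n)).eval (a n) * (k n).factorial

lemma weight_pos {a : ι → ℝ} (ha : ∀ n, 0 < a n) (k : ι → ℕ) : 0 < weight a k :=
  prod_pos fun n _ => mul_pos (ascPochhammer_pos _ _ (ha n)) (by positivity)

variable [DecidableEq ι]

lemma sum_add_single_one (k : ι → ℕ) (n : ι) :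
    univ.sum (k + Pi.single n 1) = univ.sum k + 1 := by
  simp [sum_add_distrib]

lemma sum_piAntidiag_succ_ite (e : ℕ) (f : (ι → ℕ) → ι → ℝ) :
    ∑ k ∈ piAntidiag univ (e + 1), ∑ n, (if k n ≠ 0 then f k n else 0) =
      ∑ j ∈ piAntidiag univ e, ∑ n, f (j + Pi.single n 1) n := by
  rw [sum_comm, sum_comm (s := piAntidiag univ e)]
  refine sum_congr rfl fun n _ => ?_
  rw [← sum_filter]
  refine sum_nbij' (· - Pi.single n 1) (· + Pi.single n 1) ?_ ?_ ?_ ?_ ?_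
  all_goals simp only [mem_filter, mem_piAntidiag, mem_univ, implies_true, and_true]
  · rintro k ⟨hk, hkn⟩
    have := sum_add_single_one (k - Pi.single n 1) n
    rw [tsub_add_cancel_of_le (single_one_le_of_ne_zero hkn)] at this
    omega
  · intro j hj
    rw [sum_add_single_one, hj]
    simp
  · rintro k ⟨-, hkn⟩
    exact tsub_add_cancel_of_le (single_one_le_of_ne_zero hkn)
  · intro j _
    exact add_tsub_cancel_right j _
  · rintro k ⟨-, hkn⟩
    rw [tsub_add_cancel_of_le (single_one_le_of_ne_zero hkn)]

lemma weight_add_single_one (a : ι → ℝ) (k : ι → ℕ) (n : ι) :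
    weight a (k + Pi.single n 1) = weight a k * ((k n + a n) * (k n + 1)) := by
  unfold weight
  rw [Fintype.prod_eq_mul_prod_compl n, Fintype.prod_eq_mul_prod_compl n (f := fun i => _)]
  have hrest : ∀ i ∈ ({n}ᶜ : Finset ι), (k + Pi.single n 1 : ι → ℕ) i = k i := fun i hi => by
    simp [Pi.single_eq_of_ne (by simpa using hi : i ≠ n)]
  rw [prod_congr rfl fun i hi => by rw [hrest i hi]]
  simp only [Pi.add_apply, Pi.single_eq_same, ascPochhammer_succ_eval, Nat.factorial_succ]
  push_cast
  ring

def lower (a : ι → ℝ) (v : (ι → ℕ) → ℝ) (j : ι → ℕ) : ℝ :=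
  ∑ m, (j m + a m) * (j m + 1) * v (j + Pi.single m 1)

/-- `M_d - d α_{N+1} I` with `a = (α_1, …, α_N)`, applied to `v` at `k`. -/
def shiftedM (a : ι → ℝ) (v : (ι → ℕ) → ℝ) (k : ι → ℕ) : ℝ :=
  (∑ n, (k n + a n - 1) * k n) * v k +
    ∑ n, ∑ m, if n ≠ m then (k n + a n) * (k n + 1) * v (k + Pi.single n 1 - Pi.single m 1)
      else 0

lemma ite_lower_sub_single_one (a : ι → ℝ) {v : (ι → ℕ) → ℝ} {d : ℕ}
    (hsupp : ∀ k : ι → ℕ, ∑ i, k i ≠ d → v k = 0) {k : ι → ℕ} (hk : ∑ i, k i = d) (n : ι) :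
    (if k n ≠ 0 then lower a v (k - Pi.single n 1) else 0) =
      (k n + a n - 1) * k n * v k +
        ∑ m, if m ≠ n then (k m + a m) * (k m + 1) * v (k + Pi.single m 1 - Pi.single n 1)
          else 0 := by
  by_cases hkn : k n = 0
  · have hvanish : ∀ m, m ≠ n → v (k + Pi.single m 1 - Pi.single n 1) = 0 := fun m hmn => by
      have hshift : k + Pi.single m 1 - Pi.single n 1 = k + Pi.single m 1 := by
        funext i
        rcases eq_or_ne i n with rfl | hin
        · simp [hkn, Pi.single_eq_of_ne hmn.symm]
        · simp [Pi.single_eq_of_ne hin]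
      rw [hshift]
      refine hsupp _ ?_
      rw [sum_add_single_one]
      exact hk ▸ Nat.succ_ne_self _
    simp +contextual [hkn, hvanish]
  have hle := single_one_le_of_ne_zero hkn
  rw [if_pos hkn, lower, ← add_sum_erase univ _ (mem_univ n), ← filter_ne', sum_filter]
  congr 1
  · rw [tsub_add_cancel_of_le hle]
    simp only [Pi.sub_apply, Pi.single_eq_same]
    rw [Nat.cast_sub (Nat.one_le_iff_ne_zero.2 hkn)]
    ring
  · refine sum_congr rfl fun m _ => ?_
    split_ifs with hmn
    · rw [tsub_add_eq_add_tsub hle]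
      simp [Pi.single_eq_of_ne hmn]
    · rfl

lemma shiftedM_eq_sum_lower (a : ι → ℝ) {v : (ι → ℕ) → ℝ} {d : ℕ}
    (hsupp : ∀ k : ι → ℕ, ∑ i, k i ≠ d → v k = 0) {k : ι → ℕ} (hk : ∑ i, k i = d) :
    shiftedM a v k = ∑ n, if k n ≠ 0 then lower a v (k - Pi.single n 1) else 0 := by
  rw [sum_congr rfl fun n _ => ite_lower_sub_single_one a hsupp hk n, sum_add_distrib,
    shiftedM, sum_mul, sum_comm (s := univ) (t := univ) (f := fun n m => if m ≠ n then _ else _)]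

lemma sum_weight_mul_shiftedM_eq_sum_weight_mul_lower_sq (a : ι → ℝ) {v : (ι → ℕ) → ℝ} {e : ℕ}
    (hsupp : ∀ k : ι → ℕ, ∑ i, k i ≠ e + 1 → v k = 0) :
    ∑ k ∈ piAntidiag univ (e + 1), weight a k * v k * shiftedM a v k =
      ∑ j ∈ piAntidiag univ e, weight a j * lower a v j ^ 2 := by
  calc ∑ k ∈ piAntidiag univ (e + 1), weight a k * v k * shiftedM a v k
      = ∑ k ∈ piAntidiag univ (e + 1), ∑ n,
          (if k n ≠ 0 then weight a k * v k * lower a v (k - Pi.single n 1) else 0) := by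
        refine sum_congr rfl fun k hk => ?_
        rw [shiftedM_eq_sum_lower a hsupp (mem_piAntidiag.1 hk).1, mul_sum]
        simp only [mul_ite, mul_zero]
    _ = ∑ j ∈ piAntidiag univ e, ∑ n,
          weight a (j + Pi.single n 1) * v (j + Pi.single n 1) * lower a v j := by
        rw [sum_piAntidiag_succ_ite]
        simp only [add_tsub_cancel_right]
    _ = ∑ j ∈ piAntidiag univ e, weight a j * lower a v j ^ 2 := by
        refine sum_congr rfl fun j _ => ?_
        have hfold : ∑ n, weight a j * ((j n + a n) * (j n + 1) * v (j + Pi.single n 1)) =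
            weight a j * lower a v j := (mul_sum ..).symm
        rw [sq, ← mul_assoc, ← hfold, sum_mul]
        refine sum_congr rfl fun n _ => ?_
        rw [weight_add_single_one]
        ring

theorem le_of_forall_add_shiftedM_eq {a : ι → ℝ} (ha : ∀ n, 0 < a n) {d : ℕ} (hd : 1 ≤ d)
    {v : (ι → ℕ) → ℝ} (hsupp : ∀ k : ι → ℕ, ∑ i, k i ≠ d → v k = 0) (hv : v ≠ 0) {c lam : ℝ}
    (heig : ∀ k : ι → ℕ, ∑ i, k i = d → c * v k + shiftedM a v k = lam * v k) :
    c ≤ lam := by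
  obtain ⟨e, rfl⟩ := Nat.exists_eq_add_of_le' hd
  obtain ⟨k₀, hk₀⟩ := Function.ne_iff.1 hv
  have hk₀d : k₀ ∈ piAntidiag univ (e + 1) :=
    mem_piAntidiag.2 ⟨not_imp_comm.1 (hsupp k₀) hk₀, by simp⟩
  have hnorm : 0 < ∑ k ∈ piAntidiag univ (e + 1), weight a k * v k ^ 2 :=
    sum_pos' (fun k _ => mul_nonneg (weight_pos ha k).le (sq_nonneg _))
      ⟨k₀, hk₀d, mul_pos (weight_pos ha k₀) (sq_pos_of_ne_zero hk₀)⟩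
  have hform : 0 ≤ ∑ k ∈ piAntidiag univ (e + 1), weight a k * v k * shiftedM a v k := by
    rw [sum_weight_mul_shiftedM_eq_sum_weight_mul_lower_sq a hsupp]
    exact sum_nonneg fun j _ => mul_nonneg (weight_pos ha j).le (sq_nonneg _)
  have hexpand : lam * ∑ k ∈ piAntidiag univ (e + 1), weight a k * v k ^ 2 =
      c * ∑ k ∈ piAntidiag univ (e + 1), weight a k * v k ^ 2 +
        ∑ k ∈ piAntidiag univ (e + 1), weight a k * v k * shiftedM a v k := by
    rw [mul_sum, mul_sum, ← sum_add_distrib]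
    refine sum_congr rfl fun k hk => ?_
    have := heig k (mem_piAntidiag.1 hk).1
    linear_combination -(weight a k * v k) * this
  exact le_of_mul_le_mul_right (by linarith) hnorm

end MdEigenvalue

lemma shiftIdx_eq_add_single_sub_single (N : ℕ) (k : Fin N → ℕ) (n m : Fin N) :
    shiftIdx N k n m = k + Pi.single n 1 - Pi.single m 1 := by
  funext i
  simp [shiftIdx, Pi.single_apply]

open MdEigenvalue in
theorem Md_eigenvalue_lower_bound_general (N d : ℕ) (hd : 2 ≤ d)
    (α : Fin (N + 1) → ℝ) (hα : ∀ k, 0 < α k) (lam : ℝ)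
    (v : (Fin N → ℕ) → ℝ)
    (hsupp : ∀ k : Fin N → ℕ, (∑ i, k i) ≠ d → v k = 0)
    (hv : v ≠ 0)
    (heig : ∀ k : Fin N → ℕ, (∑ i, k i) = d →
      ((d : ℝ) * α (Fin.last N) + ∑ n, ((k n : ℝ) + α (Fin.castSucc n) - 1) * (k n : ℝ)) * v k
        + ∑ n, ∑ m, (if n ≠ m then
            ((k n : ℝ) + α (Fin.castSucc n)) * ((k n : ℝ) + 1) * v (shiftIdx N k n m)
          else 0)
      = lam * v k) :
    (d : ℝ) * α (Fin.last N) ≤ lam := by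
  refine le_of_forall_add_shiftedM_eq (a := fun n => α n.castSucc) (fun n => hα _) (by omega)
    hsupp hv fun k hk => ?_
  rw [← heig k hk, shiftedM]
  simp only [shiftIdx_eq_add_single_sub_single]
  rw [add_mul, add_assoc]

/-- Every (real) eigenvalue of the matrix M_d on K_d = {k ∈ ℤ_+^N : Σk_i = d}, with
M_d(k,k) = dα_{N+1} + Σ_n (k_n+α_n−1)k_n, M_d(k,k+e_n−e_m) = (k_n+α_n)(k_n+1) for n ≠ m
and 0 otherwise, is at least d·α_{N+1}.  An eigenvector is encoded as a function v on
multi-indices supported on K_d. -/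
theorem Md_eigenvalue_lower_bound (N d : ℕ) (hN : 2 ≤ N) (hd : 2 ≤ d)
    (α : Fin (N + 1) → ℝ) (hα : ∀ k, 0 < α k) (lam : ℝ)
    (v : (Fin N → ℕ) → ℝ)
    (hsupp : ∀ k : Fin N → ℕ, (∑ i, k i) ≠ d → v k = 0)
    (hv : v ≠ 0)
    (heig : ∀ k : Fin N → ℕ, (∑ i, k i) = d →
      ((d : ℝ) * α (Fin.last N) + ∑ n, ((k n : ℝ) + α (Fin.castSucc n) - 1) * (k n : ℝ)) * v k
        + ∑ n, ∑ m, (if n ≠ m then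
            ((k n : ℝ) + α (Fin.castSucc n)) * ((k n : ℝ) + 1) * v (shiftIdx N k n m)
          else 0)
      = lam * v k) :
    (d : ℝ) * α (Fin.last N) ≤ lam :=
  Md_eigenvalue_lower_bound_general N d hd α hα lam v hsupp hv heig

end
end

section
/- Commutation identity for one-step lifting of the reduced operator: for any polynomial ψ homogeneous of degree d in N variables, the operator L̃ = Σ_{n=1}^N (x_n ∂_n² + α_n ∂_n) satisfies L̃(|x|_1 ψ) = |x|_1 L̃ψ + (ᾱ + 2d)ψ, where ᾱ = Σ_{n=1}^N α_n and |x|_1 = Σ_{n=1}^N x_n. -/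
open MvPolynomial

noncomputable section

/-- The reduced operator L̃ = Σ_n (x_n ∂_n² + α_n ∂_n) on polynomials. -/
def Ltil (N : ℕ) (α : Fin N → ℝ) (ψ : MvPolynomial (Fin N) ℝ) : MvPolynomial (Fin N) ℝ :=
  ∑ n, (X n * pderiv n (pderiv n ψ) + C (α n) * pderiv n ψ)

lemma X_mul_pderiv_monomial {N : ℕ} (s : Fin N →₀ ℕ) (a : ℝ) (n : Fin N) :
    X n * pderiv n (monomial s a) = monomial s (a * s n) := by
  rw [pderiv_monomial]
  rcases Nat.eq_zero_or_pos (s n) with h | h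
  · simp [h]
  · rw [X, monomial_mul, one_mul]
    have : Finsupp.single n 1 + (s - Finsupp.single n 1) = s := by
      ext m
      rcases eq_or_ne m n with rfl | hm
      · simp [Finsupp.single_apply]; omega
      · simp [Finsupp.single_apply, hm, Ne.symm hm]
    rw [this]

/-- Euler's identity for homogeneous polynomials. -/
lemma euler {N d : ℕ} (ψ : MvPolynomial (Fin N) ℝ) (hψ : ψ.IsHomogeneous d) :
    ∑ n, X n * pderiv n ψ = C (d : ℝ) * ψ := by
  have h1 : ∀ n, X n * pderiv n ψ = ∑ s ∈ ψ.support, monomial s (coeff s ψ * s n) := by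
    intro n
    conv_lhs => rw [← support_sum_monomial_coeff ψ, map_sum, Finset.mul_sum]
    exact Finset.sum_congr rfl fun s _ => X_mul_pderiv_monomial s _ n
  simp only [h1]
  rw [Finset.sum_comm]
  conv_rhs => rw [← support_sum_monomial_coeff ψ]
  rw [Finset.mul_sum]
  refine Finset.sum_congr rfl fun s hs => ?_
  rw [MvPolynomial.mem_support_iff] at hs
  have hd : ∑ n, (s n : ℝ) = (d : ℝ) := by
    have h2 := hψ hs
    rw [← h2]
    simp [Finsupp.weight, Finsupp.linearCombination]
    rw [Finsupp.sum_fintype]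
    simp
  rw [C_mul_monomial, ← map_sum, ← Finset.mul_sum, hd, mul_comm]

/-- Commutation identity: L̃(|x|₁ ψ) = |x|₁ L̃ψ + (ᾱ + 2d)ψ for ψ homogeneous of degree d. -/
theorem Ltil_mul_linear (N d : ℕ) (hN : 1 ≤ N) (α : Fin N → ℝ) (hα : ∀ n, 0 < α n)
    (ψ : MvPolynomial (Fin N) ℝ) (hψ : ψ.IsHomogeneous d) :
    Ltil N α ((∑ n, X n) * ψ)
      = (∑ n, X n) * Ltil N α ψ + C ((∑ n, α n) + 2 * (d : ℝ)) * ψ := by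
  have hS : ∀ n : Fin N, pderiv n (∑ m, (X m : MvPolynomial (Fin N) ℝ)) = 1 := by
    intro n
    rw [map_sum]
    simp [Pi.single_apply]
  have key : ∀ n : Fin N,
      X n * pderiv n (pderiv n ((∑ m, X m) * ψ)) + C (α n) * pderiv n ((∑ m, X m) * ψ)
        = (∑ m, X m) * (X n * pderiv n (pderiv n ψ) + C (α n) * pderiv n ψ)
          + C (α n) * ψ + 2 * (X n * pderiv n ψ) := by
    intro n
    rw [pderiv_mul, hS, one_mul, map_add, pderiv_mul, hS, one_mul]
    ring
  unfold Ltil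
  simp only [key]
  rw [Finset.sum_add_distrib, Finset.sum_add_distrib, ← Finset.mul_sum, ← Finset.sum_mul,
    ← Finset.mul_sum, euler ψ hψ, ← map_sum C α Finset.univ, map_add, map_mul, map_ofNat]
  ring

end
end

section
/- The spectrum recursion holds: if Λ̃_d denotes the multiset of eigenvalues of the operator φ ↦ |x|_1 · L̃_d φ restricted to homogeneous polynomials of degree d (where L̃ = Σ_n (x_n∂_n² + α_n∂_n) maps degree d+1 to degree d homogeneous polynomials after multiplication), then Λ̃_{d+1} = (2d + ᾱ + Λ̃_d) ∪ {0 with multiplicity C(N,d+1) − C(N,d)}, where C(N,d) = binom(d+N−1, d) is the dimension of the space of degree-d homogeneous polynomials in N variables. -/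
/-!
On `H_{d+1}` the operator `T = |x|₁ L̃` factors as `B ∘ A`, where `A = L̃ : H_{d+1} → H_d` and `B`
is multiplication by `|x|₁ = ∑ xₙ`. The commutation relation
`L̃(|x|₁ φ) = |x|₁ L̃φ + 2 ∑ xₙ ∂ₙφ + ᾱ φ` and Euler's identity give `A ∘ B = T + (2d + ᾱ)` on `H_d`.
Since `A ∘ B` and `B ∘ A` have the same nonzero eigenvalues with the same multiplicities, this is
the shifted part of the spectrum. For the eigenvalue `0`: `B` is injective, and `A ∘ B` is
invertible because `T` has no negative eigenvalues while `2d + ᾱ > 0`; so `A` is onto and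
`ker (B ∘ A) = ker A` has dimension `dim H_{d+1} - dim H_d`.
-/

open MvPolynomial Module

noncomputable section

/-- The reduced operator L̃ = Σ_n (x_n ∂_n² + α_n ∂_n) as a linear endomorphism of
the polynomial algebra. -/
def LtilLM (N : ℕ) (α : Fin N → ℝ) :
    MvPolynomial (Fin N) ℝ →ₗ[ℝ] MvPolynomial (Fin N) ℝ :=
  ∑ n, (LinearMap.mulLeft ℝ (X n) ∘ₗ (pderiv n).toLinearMap ∘ₗ (pderiv n).toLinearMap
        + α n • (pderiv n).toLinearMap)

/-- The operator T : φ ↦ |x|₁ · L̃φ; it maps homogeneous polynomials of degree d to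
homogeneous polynomials of degree d. -/
def Tlift (N : ℕ) (α : Fin N → ℝ) : Module.End ℝ (MvPolynomial (Fin N) ℝ) :=
  LinearMap.mulLeft ℝ (∑ n, X n) ∘ₗ LtilLM N α

namespace MvPolynomial

variable {σ R : Type*}

instance [Finite σ] [CommSemiring R] (n : ℕ) : Module.Finite R (homogeneousSubmodule σ R n) :=
  Module.Finite.iff_fg.mpr (weightedHomogeneousSubmodule_fg R 1 (fun _ => one_ne_zero) n)

theorem finrank_homogeneousSubmodule [Fintype σ] [CommRing R] [Nontrivial R] (n : ℕ) :
    finrank R (homogeneousSubmodule σ R n) = (n + Fintype.card σ - 1).choose n := by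
  classical
  have hsupp : {d : σ →₀ ℕ | d.degree = n} =
      ((Finset.univ : Finset σ).finsuppAntidiag n : Set (σ →₀ ℕ)) := by
    ext d
    simp [Finsupp.degree_eq_sum]
  rw [homogeneousSubmodule_eq_finsupp_supported, ← restrictSupport,
    finrank_eq_nat_card_basis (basisRestrictSupport R {d : σ →₀ ℕ | d.degree = n}), hsupp,
    Nat.card_coe_set_eq, Set.ncard_coe_finset, Finset.card_finsuppAntidiag_nat_eq_choose,
    Finset.card_univ, add_comm]

theorem IsHomogeneous.X_mul_pderiv [CommSemiring R] {φ : MvPolynomial σ R} {n : ℕ}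
    (h : φ.IsHomogeneous n) (i : σ) : (X i * pderiv i φ).IsHomogeneous n := by
  cases n with
  | zero =>
    rw [← totalDegree_zero_iff_isHomogeneous, totalDegree_eq_zero_iff_eq_C] at h
    rw [h, pderiv_C, mul_zero]
    exact isHomogeneous_zero _ _ _
  | succ n => simpa [add_comm] using (isHomogeneous_X R i).mul h.pderiv

theorem isHomogeneous_sum_X [Fintype σ] [CommSemiring R] :
    (∑ i, X i : MvPolynomial σ R).IsHomogeneous 1 :=
  IsHomogeneous.sum _ _ _ fun i _ => isHomogeneous_X R i

theorem sum_X_ne_zero [Fintype σ] [Nonempty σ] [CommSemiring R] [Nontrivial R] :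
    (∑ i, X i : MvPolynomial σ R) ≠ 0 := by
  classical
  obtain ⟨i⟩ := ‹Nonempty σ›
  intro h
  simpa [coeff_sum, coeff_X, Finsupp.single_left_inj one_ne_zero] using
    congrArg (coeff (Finsupp.single i 1)) h

variable (σ R) in
def mulSumX [Fintype σ] [CommSemiring R] (d : ℕ) :
    homogeneousSubmodule σ R d →ₗ[R] homogeneousSubmodule σ R (d + 1) :=
  (LinearMap.mulLeft R (∑ i, X i)).restrict fun _ h => by
    simpa [add_comm] using isHomogeneous_sum_X.mul h

theorem mulSumX_injective [Fintype σ] [Nonempty σ] [CommRing R] [IsDomain R] (d : ℕ) :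
    Function.Injective (mulSumX σ R d) := fun _ _ h =>
  Subtype.ext <| mul_left_cancel₀ sum_X_ne_zero (congrArg Subtype.val h)

end MvPolynomial

namespace Module.End

variable {K V W P : Type*} [Field K] [AddCommGroup V] [Module K V] [AddCommGroup W] [Module K W]
  [AddCommGroup P] [Module K P]

theorem finrank_eigenspace_comp_le [FiniteDimensional K W] (A : V →ₗ[K] W) (B : W →ₗ[K] V)
    {μ : K} (hμ : μ ≠ 0) :
    finrank K (eigenspace (B ∘ₗ A) μ) ≤ finrank K (eigenspace (A ∘ₗ B) μ) := by
  have hmaps : ∀ v ∈ eigenspace (B ∘ₗ A) μ, A v ∈ eigenspace (A ∘ₗ B) μ := fun v hv => by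
    rw [mem_eigenspace_iff, LinearMap.comp_apply] at hv ⊢
    rw [hv, map_smul]
  refine LinearMap.finrank_le_finrank_of_injective (f := A.restrict hmaps) fun v w hvw => ?_
  have hAvw : A v = A w := congrArg Subtype.val hvw
  have hBAv := mem_eigenspace_iff.mp v.2
  have hBAw := mem_eigenspace_iff.mp w.2
  rw [LinearMap.comp_apply] at hBAv hBAw
  exact Subtype.ext <| smul_right_injective V hμ <| hBAv.symm.trans (by rw [hAvw, hBAw])

theorem finrank_eigenspace_comp_comm [FiniteDimensional K V] [FiniteDimensional K W]
    (A : V →ₗ[K] W) (B : W →ₗ[K] V) {μ : K} (hμ : μ ≠ 0) :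
    finrank K (eigenspace (B ∘ₗ A) μ) = finrank K (eigenspace (A ∘ₗ B) μ) :=
  (finrank_eigenspace_comp_le A B hμ).antisymm (finrank_eigenspace_comp_le B A hμ)

theorem finrank_inf_eigenspace_eq {T : End K P} {p : Submodule K P} (S : End K p) {c : K}
    (hS : ∀ v : p, (S v : P) = T v + c • v) (μ : K) :
    finrank K (p ⊓ eigenspace T μ : Submodule K P) = finrank K (eigenspace S (μ + c)) := by
  have hcomap : eigenspace S (μ + c) = (p ⊓ eigenspace T μ).comap p.subtype := by
    ext v
    simp [Subtype.ext_iff, hS, add_smul]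
  rw [hcomap]
  exact (Submodule.comapSubtypeEquivOfLe inf_le_left).finrank_eq.symm

section Factorization

variable {T : End K P} {U V : Submodule K P} [FiniteDimensional K U] [FiniteDimensional K V]
  (A : V →ₗ[K] U) (B : U →ₗ[K] V) {c : K}

theorem finrank_inf_eigenspace_of_factor (hBA : ∀ v, (B (A v) : P) = T v)
    (hAB : ∀ u, (A (B u) : P) = T u + c • u) {μ : K} (hμ : μ ≠ 0) :
    finrank K (V ⊓ eigenspace T μ : Submodule K P) =
      finrank K (U ⊓ eigenspace T (μ - c) : Submodule K P) := by
  rw [finrank_inf_eigenspace_eq (B ∘ₗ A) (c := 0) (by simpa using hBA), add_zero,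
    finrank_eigenspace_comp_comm A B hμ, finrank_inf_eigenspace_eq (A ∘ₗ B) hAB, sub_add_cancel]

theorem finrank_inf_eigenspace_zero_of_factor (hBA : ∀ v, (B (A v) : P) = T v)
    (hAB : ∀ u, (A (B u) : P) = T u + c • u) (hB : Function.Injective B)
    (hc : U ⊓ eigenspace T (-c) = ⊥) :
    finrank K (V ⊓ eigenspace T 0 : Submodule K P) = finrank K V - finrank K U := by
  have hAB_inj : LinearMap.ker (A ∘ₗ B) = ⊥ := by
    have h := finrank_inf_eigenspace_eq (A ∘ₗ B) hAB (-c)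
    rw [hc, finrank_bot, neg_add_cancel, eigenspace_zero] at h
    exact Submodule.finrank_eq_zero.mp h.symm
  have hA : Function.Surjective A := by
    have h := LinearMap.injective_iff_surjective.mp (LinearMap.ker_eq_bot.mp hAB_inj)
    rw [LinearMap.coe_comp] at h
    exact h.of_comp
  have hrank := LinearMap.finrank_range_add_finrank_ker A
  rw [LinearMap.range_eq_top.mpr hA, finrank_top] at hrank
  rw [finrank_inf_eigenspace_eq (B ∘ₗ A) (c := 0) (by simpa using hBA), add_zero,
    eigenspace_zero, LinearMap.ker_comp_of_ker_eq_bot A (LinearMap.ker_eq_bot.mpr hB)]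
  omega

end Factorization

end Module.End

section Operators

variable {N : ℕ} (α : Fin N → ℝ)

theorem LtilLM_apply (φ : MvPolynomial (Fin N) ℝ) :
    LtilLM N α φ = ∑ n, (X n * pderiv n (pderiv n φ) + α n • pderiv n φ) := by
  simp [LtilLM]

theorem Tlift_apply (φ : MvPolynomial (Fin N) ℝ) :
    Tlift N α φ = (∑ n, X n) * LtilLM N α φ := rfl

theorem isHomogeneous_LtilLM {φ : MvPolynomial (Fin N) ℝ} {e : ℕ}
    (h : φ.IsHomogeneous (e + 1)) : (LtilLM N α φ).IsHomogeneous e := by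
  have hd : ∀ n, (pderiv n φ).IsHomogeneous e := fun n => h.pderiv
  rw [LtilLM_apply, ← mem_homogeneousSubmodule]
  exact Submodule.sum_mem _ fun n _ =>
    add_mem ((hd n).X_mul_pderiv n) (Submodule.smul_mem _ _ (hd n))

theorem LtilLM_sum_X_mul (φ : MvPolynomial (Fin N) ℝ) :
    LtilLM N α ((∑ n, X n) * φ) =
      (∑ n, X n) * LtilLM N α φ + 2 * ∑ n, X n * pderiv n φ + (∑ n, α n) • φ := by
  have hpderiv_sum_X : ∀ n, pderiv n (∑ k, X k : MvPolynomial (Fin N) ℝ) = 1 := fun n => by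
    rw [map_sum, Finset.sum_eq_single n (fun k _ hk => pderiv_X_of_ne hk) (by simp),
      pderiv_X_self]
  simp only [LtilLM_apply, Derivation.leibniz, hpderiv_sum_X, smul_eq_mul, mul_one, map_add,
    Finset.mul_sum, Finset.sum_smul, ← Finset.sum_add_distrib]
  refine Finset.sum_congr rfl fun n _ => ?_
  simp only [smul_eq_C_mul]
  ring

theorem LtilLM_sum_X_mul_of_isHomogeneous {φ : MvPolynomial (Fin N) ℝ} {d : ℕ}
    (h : φ.IsHomogeneous d) :
    LtilLM N α ((∑ n, X n) * φ) = Tlift N α φ + (2 * (d : ℝ) + ∑ n, α n) • φ := by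
  rw [LtilLM_sum_X_mul, h.sum_X_mul_pderiv, Tlift_apply, nsmul_eq_mul]
  simp only [smul_eq_C_mul, map_add, map_mul, map_ofNat, map_natCast]
  ring

variable (N) in
def restrictLtil (d : ℕ) :
    homogeneousSubmodule (Fin N) ℝ (d + 1) →ₗ[ℝ] homogeneousSubmodule (Fin N) ℝ d :=
  (LtilLM N α).restrict fun _ => isHomogeneous_LtilLM α

end Operators

open Module.End in
/-- Spectrum recursion Λ̃_{d+1} = (2d + ᾱ + Λ̃_d) ∪ {0 [C(N,d+1) − C(N,d)]}:
for λ ≠ 0 the λ-eigenspace of T on H_{d+1} has the same dimension as the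
(λ − (2d+ᾱ))-eigenspace of T on H_d, and the 0-eigenspace of T on H_{d+1} has dimension
C(N,d+1) − C(N,d), where C(N,d) = binom(d+N−1,d) = dim H_d.  The nonnegativity of all
eigenvalues is supplied as a hypothesis. -/
theorem spectrum_recursion (N d : ℕ) (hN : 1 ≤ N) (α : Fin N → ℝ) (hα : ∀ n, 0 < α n)
    (hnonneg : ∀ (e : ℕ) (lam : ℝ) (φ : MvPolynomial (Fin N) ℝ),
      φ.IsHomogeneous e → φ ≠ 0 → Tlift N α φ = lam • φ → 0 ≤ lam) :
    (∀ lam : ℝ, lam ≠ 0 →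
      Module.finrank ℝ
        ↥(homogeneousSubmodule (Fin N) ℝ (d + 1) ⊓ Module.End.eigenspace (Tlift N α) lam)
      = Module.finrank ℝ
        ↥(homogeneousSubmodule (Fin N) ℝ d ⊓
            Module.End.eigenspace (Tlift N α) (lam - (2 * (d : ℝ) + ∑ n, α n)))) ∧
    Module.finrank ℝ
        ↥(homogeneousSubmodule (Fin N) ℝ (d + 1) ⊓ Module.End.eigenspace (Tlift N α) 0)
      = (d + 1 + N - 1).choose (d + 1) - (d + N - 1).choose d := by
  have : Nonempty (Fin N) := ⟨⟨0, hN⟩⟩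
  have hBA : ∀ v, (mulSumX (Fin N) ℝ d (restrictLtil N α d v) : MvPolynomial (Fin N) ℝ) =
      Tlift N α v := fun _ => rfl
  have hAB : ∀ u, (restrictLtil N α d (mulSumX (Fin N) ℝ d u) : MvPolynomial (Fin N) ℝ) =
      Tlift N α u + (2 * (d : ℝ) + ∑ n, α n) • u := fun u =>
    LtilLM_sum_X_mul_of_isHomogeneous α u.2
  have hno_neg_eigenvalue : homogeneousSubmodule (Fin N) ℝ d ⊓
      eigenspace (Tlift N α) (-(2 * (d : ℝ) + ∑ n, α n)) = ⊥ := by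
    refine eq_bot_iff.mpr fun φ ⟨hφ, hTφ⟩ => (Submodule.mem_bot ℝ).mpr ?_
    by_contra hφ0
    have hneg_nonneg := hnonneg d _ φ hφ hφ0 (mem_eigenspace_iff.mp hTφ)
    have hα_sum := Finset.sum_pos (fun n _ => hα n) (Finset.univ_nonempty (α := Fin N))
    linarith [(Nat.cast_nonneg d : (0 : ℝ) ≤ d)]
  refine ⟨fun lam hlam => finrank_inf_eigenspace_of_factor _ _ hBA hAB hlam, ?_⟩
  rw [finrank_inf_eigenspace_zero_of_factor _ _ hBA hAB (mulSumX_injective d)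
    hno_neg_eigenvalue, finrank_homogeneousSubmodule, finrank_homogeneousSubmodule,
    Fintype.card_fin]

end
end

section
/- Detailed balance holds for the discrete model: for all x, y ∈ Δ_M^(N), μ_{M,α}^(N)(x) q_{x,y} = μ_{M,α}^(N)(y) q_{y,x}; in particular the chain generated by A_{M,α}^(N) is reversible with respect to μ_{M,α}^(N). -/
noncomputable section

/-- Ascending factorial [a]_m = a(a+1)⋯(a+m−1). -/
def ascFac (a : ℝ) (m : ℕ) : ℝ := (ascPochhammer ℝ m).eval a

/-- States of the discrete model, encoded by the counts m = M·x ∈ ℤ_+^N with Σ m_i ≤ M. -/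
def statesD (N M : ℕ) : Finset (Fin N → ℕ) :=
  (Fintype.piFinset fun _ : Fin N => Finset.range (M + 1)).filter fun m => ∑ i, m i ≤ M

/-- Unnormalized stationary weight. -/
def wD (N M : ℕ) (α : Fin (N + 1) → ℝ) (m : Fin N → ℕ) : ℝ :=
  ascFac (α (Fin.last N)) (M - ∑ i, m i) / (Nat.factorial (M - ∑ i, m i))
    * ∏ i, ascFac (α (Fin.castSucc i)) (m i) / (Nat.factorial (m i))

/-- Normalizing constant. -/
def ZD (N M : ℕ) (α : Fin (N + 1) → ℝ) : ℝ := ∑ m ∈ statesD N M, wD N M α m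

/-- The stationary distribution μ_{M,α}^(N). -/
def muD (N M : ℕ) (α : Fin (N + 1) → ℝ) (m : Fin N → ℕ) : ℝ := wD N M α m / ZD N M α

def upD (N : ℕ) (m : Fin N → ℕ) (i : Fin N) : Fin N → ℕ := Function.update m i (m i + 1)

def downD (N : ℕ) (m : Fin N → ℕ) (i : Fin N) : Fin N → ℕ := Function.update m i (m i - 1)

/-- Transition rates of the Markov chain (in the count coordinates m = M·x):
q(m, m−e_i) = m_i α_{N+1} + m_i (M−|m|₁),  q(m, m+e_i) = α_i (M−|m|₁) + m_i (M−|m|₁). -/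
def qD (N M : ℕ) (α : Fin (N + 1) → ℝ) (m m' : Fin N → ℕ) : ℝ :=
  ∑ i, ((if m' = downD N m i ∧ 1 ≤ m i then
          (m i : ℝ) * α (Fin.last N) + (m i : ℝ) * ((M - ∑ j, m j : ℕ) : ℝ) else 0)
      + (if m' = upD N m i then
          α (Fin.castSucc i) * ((M - ∑ j, m j : ℕ) : ℝ)
            + (m i : ℝ) * ((M - ∑ j, m j : ℕ) : ℝ) else 0))

/-
The rates only connect m with m + e_i, so it suffices to balance each such pair of
neighbours, and the normalizing constant cancels. The weights of m and m + e_i differ only in the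
factors [α_{N+1}]_n / n! (with n = M − |m|₁ dropping by one) and [α_i]_n / n! (with n = m_i
rising by one), and [a]_{n+1} / (n+1)! · (n+1) = [a]_n / n! · (a+n) turns the up-rate of m into
the down-rate of m + e_i.
-/

lemma ascFac_succ (a : ℝ) (n : ℕ) : ascFac a (n + 1) = ascFac a n * (a + n) := by
  simp [ascFac, ascPochhammer_succ_right]

lemma ascFac_succ_div_factorial_mul (a : ℝ) (n : ℕ) :
    ascFac a (n + 1) / ((n + 1).factorial : ℝ) * ((n + 1 : ℕ) : ℝ)
      = ascFac a n / (n.factorial : ℝ) * (a + n) := by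
  rw [ascFac_succ, Nat.factorial_succ]
  push_cast
  field_simp

section Moves

variable {N : ℕ} (m : Fin N → ℕ) (i : Fin N)

lemma upD_apply_self : upD N m i i = m i + 1 := by
  simp [upD]

lemma sum_upD : ∑ j, upD N m i j = ∑ j, m j + 1 := by
  rw [upD, Finset.sum_update_of_mem (Finset.mem_univ i), Finset.sdiff_singleton_eq_erase,
    ← Finset.add_sum_erase _ m (Finset.mem_univ i)]
  ring

lemma prod_upD {R : Type*} [CommMonoid R] (g : Fin N → ℕ → R) :
    ∏ j, g j (upD N m i j) = g i (m i + 1) * ∏ j ∈ Finset.univ.erase i, g j (m j) := by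
  simp only [upD, Function.apply_update g, Finset.prod_update_of_mem (Finset.mem_univ i),
    Finset.sdiff_singleton_eq_erase]

lemma eq_upD_iff (m' : Fin N → ℕ) : m' = upD N m i ↔ m = downD N m' i ∧ 1 ≤ m' i := by
  constructor
  · rintro rfl
    refine ⟨funext fun j => ?_, by simp [upD]⟩
    by_cases hj : j = i <;> simp [upD, downD, Function.update_apply, hj]
  · rintro ⟨rfl, h1⟩
    funext j
    by_cases hj : j = i <;> simp [upD, downD, Function.update_apply, hj]
    omega

end Moves

lemma wD_mul_upRate (N M : ℕ) (α : Fin (N + 1) → ℝ) (m : Fin N → ℕ) (i : Fin N)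
    (h : ∑ j, m j + 1 ≤ M) :
    wD N M α m * (α (Fin.castSucc i) * ((M - ∑ j, m j : ℕ) : ℝ)
        + (m i : ℝ) * ((M - ∑ j, m j : ℕ) : ℝ))
    = wD N M α (upD N m i) * ((upD N m i i : ℝ) * α (Fin.last N)
        + (upD N m i i : ℝ) * ((M - ∑ j, upD N m i j : ℕ) : ℝ)) := by
  obtain ⟨t, ht⟩ : ∃ t, M - ∑ j, m j = t + 1 := ⟨M - (∑ j, m j + 1), by omega⟩
  have ht' : M - ∑ j, upD N m i j = t := by rw [sum_upD]; omega
  have hlast := ascFac_succ_div_factorial_mul (α (Fin.last N)) t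
  have hi := ascFac_succ_div_factorial_mul (α (Fin.castSucc i)) (m i)
  unfold wD
  rw [ht, ht', upD_apply_self,
    prod_upD m i fun j n => ascFac (α (Fin.castSucc j)) n / (n.factorial : ℝ),
    ← Finset.mul_prod_erase _ _ (Finset.mem_univ i)]
  set rest := ∏ j ∈ Finset.univ.erase i, ascFac (α (Fin.castSucc j)) (m j) / ((m j).factorial : ℝ)
  push_cast at hlast hi ⊢
  linear_combination
    rest * (ascFac (α (Fin.castSucc i)) (m i) / ((m i).factorial : ℝ))
        * (α (Fin.castSucc i) + m i) * hlast
      - rest * (ascFac (α (Fin.last N)) t / (t.factorial : ℝ)) * (α (Fin.last N) + t) * hi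

lemma wD_mul_upTerm_eq_wD_mul_downTerm (N M : ℕ) (α : Fin (N + 1) → ℝ) (m m' : Fin N → ℕ)
    (i : Fin N) (hm' : ∑ j, m' j ≤ M) :
    wD N M α m * (if m' = upD N m i then
        α (Fin.castSucc i) * ((M - ∑ j, m j : ℕ) : ℝ)
          + (m i : ℝ) * ((M - ∑ j, m j : ℕ) : ℝ) else 0)
    = wD N M α m' * (if m = downD N m' i ∧ 1 ≤ m' i then
        (m' i : ℝ) * α (Fin.last N) + (m' i : ℝ) * ((M - ∑ j, m' j : ℕ) : ℝ) else 0) := by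
  by_cases hup : m' = upD N m i
  · rw [if_pos hup, if_pos ((eq_upD_iff m i m').mp hup)]
    subst hup
    exact wD_mul_upRate N M α m i (sum_upD m i ▸ hm')
  · rw [if_neg hup, if_neg (mt (eq_upD_iff m i m').mpr hup), mul_zero, mul_zero]

lemma wD_mul_qD_comm (N M : ℕ) (α : Fin (N + 1) → ℝ) (m m' : Fin N → ℕ)
    (hm : ∑ i, m i ≤ M) (hm' : ∑ i, m' i ≤ M) :
    wD N M α m * qD N M α m m' = wD N M α m' * qD N M α m' m := by
  simp only [qD, Finset.mul_sum, mul_add]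
  refine Finset.sum_congr rfl fun i _ => ?_
  rw [wD_mul_upTerm_eq_wD_mul_downTerm N M α m m' i hm',
    ← wD_mul_upTerm_eq_wD_mul_downTerm N M α m' m i hm]
  ring

theorem discrete_detailed_balance_general (N M : ℕ)
    (α : Fin (N + 1) → ℝ) (m m' : Fin N → ℕ)
    (hm : ∑ i, m i ≤ M) (hm' : ∑ i, m' i ≤ M) :
    muD N M α m * qD N M α m m' = muD N M α m' * qD N M α m' m := by
  rw [muD, muD, div_mul_eq_mul_div, div_mul_eq_mul_div, wD_mul_qD_comm N M α m m' hm hm']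

/-- Detailed balance: μ_{M,α}^(N)(x) q_{x,y} = μ_{M,α}^(N)(y) q_{y,x} for all states x, y;
i.e. the chain generated by A_{M,α}^(N) is reversible with respect to μ_{M,α}^(N). -/
theorem discrete_detailed_balance (N M : ℕ) (hN : 1 ≤ N) (hM : N + 1 ≤ M)
    (α : Fin (N + 1) → ℝ) (hα : ∀ k, 0 < α k) (m m' : Fin N → ℕ)
    (hm : ∑ i, m i ≤ M) (hm' : ∑ i, m' i ≤ M) :
    muD N M α m * qD N M α m m' = muD N M α m' * qD N M α m' m :=
  discrete_detailed_balance_general N M α m m' hm hm'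

end
end

section
/- The linear functional u(x) = α_2 x_1 − α_1 x_2 on the infinite-dimensional simplex Δ^(∞) satisfies L_{α,α_∞}^(∞) u = −α_∞ u, i.e. u is an eigenfunction of the infinite-dimensional generator with eigenvalue −α_∞. Consequently the spectral gap of L_{α,α_∞}^(∞) is at most α_∞. -/
noncomputable section

/-- The infinite-dimensional simplex Δ^(∞) = {x ∈ [0,1]^ℕ : Σ x_i ≤ 1}. -/
def simplexInf : Set (ℕ → ℝ) :=
  {x | (∀ i, 0 ≤ x i ∧ x i ≤ 1) ∧ Summable x ∧ ∑' i, x i ≤ 1}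

/-- Partial derivative ∂_n f at x (in the n-th coordinate). -/
def pdI (n : ℕ) (f : (ℕ → ℝ) → ℝ) (x : ℕ → ℝ) : ℝ :=
  deriv (fun t : ℝ => f (Function.update x n t)) (x n)

/-- The linear functional u(x) = α₂ x₁ − α₁ x₂ (indices shifted to start at 0). -/
def uInf (α : ℕ → ℝ) (x : ℕ → ℝ) : ℝ := α 1 * x 0 - α 0 * x 1

lemma pdI_uInf (α : ℕ → ℝ) (n : ℕ) (x : ℕ → ℝ) :
    pdI n (uInf α) x = if n = 0 then α 1 else if n = 1 then -α 0 else 0 := by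
  unfold pdI uInf
  rcases n with _ | _ | n
  · simp only [Function.update_self, Function.update_of_ne (by norm_num : (1:ℕ) ≠ 0)]
    have : HasDerivAt (fun t : ℝ => α 1 * t - α 0 * x 1) (α 1) (x 0) := by
      simpa using ((hasDerivAt_id (x 0)).const_mul (α 1)).sub_const (α 0 * x 1)
    simpa using this.deriv
  · simp only [Function.update_self, Function.update_of_ne (by norm_num : (0:ℕ) ≠ 1)]
    have : HasDerivAt (fun t : ℝ => α 1 * x 0 - α 0 * t) (-α 0) (x 1) := by
      simpa using ((hasDerivAt_id (x 1)).const_mul (α 0)).const_sub (α 1 * x 0)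
    simpa using this.deriv
  · simp only [Function.update_of_ne (by omega : (0:ℕ) ≠ n + 2),
      Function.update_of_ne (by omega : (1:ℕ) ≠ n + 2)]
    simp

lemma pdI2_uInf (α : ℕ → ℝ) (n : ℕ) (x : ℕ → ℝ) :
    pdI n (fun y => pdI n (uInf α) y) x = 0 := by
  have : (fun t : ℝ => pdI n (uInf α) (Function.update x n t))
      = fun _ : ℝ => (if n = 0 then α 1 else if n = 1 then -α 0 else 0) := by
    funext t; rw [pdI_uInf]
  show deriv (fun t : ℝ => pdI n (uInf α) (Function.update x n t)) (x n) = 0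
  rw [this, deriv_const]

/-- u(x) = α₂x₁ − α₁x₂ is an eigenfunction of the infinite-dimensional generator
L_{α,α_∞}^(∞) with eigenvalue −α_∞: the series Σ_n [x_n(1−|x|₁)∂_n²u + (α_n(1−|x|₁) −
α_∞x_n)∂_n u] equals −α_∞ u on Δ^(∞); consequently gap(L_{α,α_∞}^(∞)) ≤ α_∞. -/
theorem uInf_eigenfunction (α : ℕ → ℝ) (hα : ∀ n, 0 < α n) (hsum : Summable α)
    (αinf : ℝ) (hinf : 0 < αinf) (x : ℕ → ℝ) (hx : x ∈ simplexInf) :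
    ∑' n, (x n * (1 - ∑' i, x i) * pdI n (fun y => pdI n (uInf α) y) x
        + (α n * (1 - ∑' i, x i) - αinf * x n) * pdI n (uInf α) x)
      = -αinf * uInf α x := by
  have h : ∀ n ∉ ({0, 1} : Finset ℕ),
      (x n * (1 - ∑' i, x i) * pdI n (fun y => pdI n (uInf α) y) x
        + (α n * (1 - ∑' i, x i) - αinf * x n) * pdI n (uInf α) x) = 0 := by
    intro n hn
    simp only [Finset.mem_insert, Finset.mem_singleton] at hn
    push_neg at hn
    rw [pdI2_uInf, pdI_uInf, if_neg hn.1, if_neg hn.2]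
    ring
  rw [tsum_eq_sum h]
  rw [Finset.sum_insert (by norm_num), Finset.sum_singleton]
  rw [pdI2_uInf, pdI2_uInf, pdI_uInf, pdI_uInf]
  norm_num [uInf]
  ring
end
end
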